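/- The class R̃⁰_α(ℋ₀,ℋ₁) is nonempty (i.e., there exist auxiliary spaces and holomorphic pairs forming a collection in R̃⁰_α(ℋ₀,ℋ₁)) if and only if dim ℋ₀ = dim ℋ₁. In particular, if dim ℋ₀ < ∞, then R̃⁰_α(ℋ₀,ℋ₁) is nonempty if and only if ℋ₀ = ℋ₁. -/

import Mathlib

/- Statement 2: Proposition 2.2(3) — R̃⁰_α(ℋ₀,ℋ₁) is nonempty iff dim ℋ₀ = dim ℋ₁.
   (−τ₊(λ̄))×_α = −τ₋(λ) and the image formula for τ₋(λ) (λ ∈ ℂ₋), and symmetrically on ℂ₊. -/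

noncomputable section
open Complex ContinuousLinearMap
open scoped InnerProductSpace

/-- The open upper half plane. -/
def UHP : Set ℂ := {z | 0 < z.im}

/-- The open lower half plane. -/
def LHP : Set ℂ := {z | z.im < 0}

/-- The "imaginary part" (T − T*)/(2i) of a bounded operator. -/
def ImOp {K : Type*} [NormedAddCommGroup K] [InnerProductSpace ℂ K] [CompleteSpace K]
    (T : K →L[ℂ] K) : K →L[ℂ] K := (2 * Complex.I)⁻¹ • (T - adjoint T)

/-- The orthogonal projection of `H0` onto `ℋ₂ = ℋ₀ ⊖ ℋ₁`, as an operator on `H0`. -/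
def P2full {H0 : Type*} [NormedAddCommGroup H0] [InnerProductSpace ℂ H0] [CompleteSpace H0]
    (H1 : Submodule ℂ H0) (hH1 : CompleteSpace ↥H1) : H0 →L[ℂ] H0 :=
  letI := hH1
  ContinuousLinearMap.id ℂ H0 - H1.subtypeL.comp (Submodule.orthogonalProjectionOnto H1)

/-- The class `R̃_α(ℋ₀,ℋ₁)` of collections `τ = {τ₊,τ₋}` of holomorphic operator pairs
`(C₀(λ),C₁(λ))` (on `ℂ₊`) and `(D₀(λ),D₁(λ))` (on `ℂ₋`); Definition 2.1 of the paper,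
with the blocks `C₀₁ = C₀∘ι₁`, `C₀₂ = C₀∘ι₂` expressed through `C₀₁* = P₁∘C₀*` and
`C₀₂C₀₂* = C₀P₂C₀*`. -/
def IsRPairClass {H0 Kp Km : Type*}
    [NormedAddCommGroup H0] [InnerProductSpace ℂ H0] [CompleteSpace H0]
    [NormedAddCommGroup Kp] [InnerProductSpace ℂ Kp] [CompleteSpace Kp]
    [NormedAddCommGroup Km] [InnerProductSpace ℂ Km] [CompleteSpace Km]
    (H1 : Submodule ℂ H0) (hH1 : CompleteSpace ↥H1) (α : ℝ)
    (C0 : ℂ → H0 →L[ℂ] Kp) (C1 : ℂ → ↥H1 →L[ℂ] Kp)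
    (D0 : ℂ → H0 →L[ℂ] Km) (D1 : ℂ → ↥H1 →L[ℂ] Km) : Prop :=
  letI := hH1
  (α = 1 ∨ α = -1) ∧
  DifferentiableOn ℂ C0 UHP ∧ DifferentiableOn ℂ C1 UHP ∧
  DifferentiableOn ℂ D0 LHP ∧ DifferentiableOn ℂ D1 LHP ∧
  -- (i)  2 Im (C₁(λ)C₀₁*(λ)) + α C₀₂(λ)C₀₂*(λ) ≥ 0  on ℂ₊
  (∀ z ∈ UHP,
    ((2 : ℂ) • ImOp ((C1 z).comp ((Submodule.orthogonalProjectionOnto H1).comp (adjoint (C0 z))))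
      + (α : ℂ) • ((C0 z).comp ((P2full H1 hH1).comp (adjoint (C0 z))))).IsPositive) ∧
  -- (ii)  2 Im (D₁(λ)D₀₁*(λ)) + α D₀₂(λ)D₀₂*(λ) ≤ 0  on ℂ₋
  (∀ z ∈ LHP,
    (-((2 : ℂ) • ImOp ((D1 z).comp ((Submodule.orthogonalProjectionOnto H1).comp (adjoint (D0 z))))
      + (α : ℂ) • ((D0 z).comp ((P2full H1 hH1).comp (adjoint (D0 z)))))).IsPositive) ∧
  -- (iii)  C₁(λ)D₀₁*(λ̄) − C₀₁(λ)D₁*(λ̄) + iα C₀₂(λ)D₀₂*(λ̄) = 0  on ℂ₊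
  (∀ z ∈ UHP,
    (C1 z).comp ((Submodule.orthogonalProjectionOnto H1).comp (adjoint (D0 ((starRingEnd ℂ) z))))
      - ((C0 z).comp H1.subtypeL).comp (adjoint (D1 ((starRingEnd ℂ) z)))
      + (Complex.I * (α : ℂ)) •
          ((C0 z).comp ((P2full H1 hH1).comp (adjoint (D0 ((starRingEnd ℂ) z))))) = 0) ∧
  -- (iv) invertibility conditions
  (α = 1 →
    (∀ z ∈ UHP, ∃ e : H0 ≃L[ℂ] Kp,
        (e : H0 →L[ℂ] Kp) = C0 z - Complex.I • (C1 z).comp (Submodule.orthogonalProjectionOnto H1)) ∧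
    (∀ z ∈ LHP, ∃ e : ↥H1 ≃L[ℂ] Km,
        (e : ↥H1 →L[ℂ] Km) = (D0 z).comp H1.subtypeL + Complex.I • D1 z)) ∧
  (α = -1 →
    (∀ z ∈ UHP, ∃ e : ↥H1 ≃L[ℂ] Kp,
        (e : ↥H1 →L[ℂ] Kp) = (C0 z).comp H1.subtypeL - Complex.I • C1 z) ∧
    (∀ z ∈ LHP, ∃ e : H0 ≃L[ℂ] Km,
        (e : H0 →L[ℂ] Km) = D0 z + Complex.I • (D1 z).comp (Submodule.orthogonalProjectionOnto H1)))

/-- The linear relation `{(h₀,h₁) ∈ ℋ₀ ⊕ ℋ₁ : C₀ h₀ + C₁ h₁ = 0}` of an operator pair. -/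
def relPair {H0 K : Type*}
    [NormedAddCommGroup H0] [InnerProductSpace ℂ H0]
    [NormedAddCommGroup K] [InnerProductSpace ℂ K]
    (H1 : Submodule ℂ H0) (C0 : H0 →L[ℂ] K) (C1 : ↥H1 →L[ℂ] K) : Set (H0 × ↥H1) :=
  {p | C0 p.1 + C1 p.2 = 0}

/-- `−θ = {(h₀, −h₁) : (h₀,h₁) ∈ θ}`. -/
def negRel {H0 : Type*} [NormedAddCommGroup H0] [InnerProductSpace ℂ H0]
    (H1 : Submodule ℂ H0) (S : Set (H0 × ↥H1)) : Set (H0 × ↥H1) :=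
  {p | (p.1, -p.2) ∈ S}

/-- The `(×,α)`-adjoint relation `θ×_α`. -/
def crossRel {H0 : Type*} [NormedAddCommGroup H0] [InnerProductSpace ℂ H0] [CompleteSpace H0]
    (H1 : Submodule ℂ H0) (hH1 : CompleteSpace ↥H1) (α : ℝ)
    (S : Set (H0 × ↥H1)) : Set (H0 × ↥H1) :=
  {k | ∀ p ∈ S,
    ⟪((k.2 : ↥H1) : H0), p.1⟫_ℂ - ⟪k.1, ((p.2 : ↥H1) : H0)⟫_ℂ
      + Complex.I * (α : ℂ) * ⟪P2full H1 hH1 k.1, P2full H1 hH1 p.1⟫_ℂ = 0}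


/-- A bundled complex Hilbert space. -/
structure HilbertC : Type (u + 1) where
  carrier : Type u
  [nacg : NormedAddCommGroup carrier]
  [ips : InnerProductSpace ℂ carrier]
  [cs : CompleteSpace carrier]

attribute [instance] HilbertC.nacg HilbertC.ips HilbertC.cs

/-- The subclass `R̃⁰_α(ℋ₀,ℋ₁)`: equality holds in condition (i) and, in addition,
`C₀₁(λ)+iC₁(λ)` (for `α = +1`), resp. `C₀(λ)+iC₁(λ)P₁` (for `α = −1`), is boundedly
invertible. -/
def IsRZeroPair {H0 Kp Km : Type*}
    [NormedAddCommGroup H0] [InnerProductSpace ℂ H0] [CompleteSpace H0]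
    [NormedAddCommGroup Kp] [InnerProductSpace ℂ Kp] [CompleteSpace Kp]
    [NormedAddCommGroup Km] [InnerProductSpace ℂ Km] [CompleteSpace Km]
    (H1 : Submodule ℂ H0) (hH1 : CompleteSpace ↥H1) (α : ℝ)
    (C0 : ℂ → H0 →L[ℂ] Kp) (C1 : ℂ → ↥H1 →L[ℂ] Kp)
    (D0 : ℂ → H0 →L[ℂ] Km) (D1 : ℂ → ↥H1 →L[ℂ] Km) : Prop :=
  letI := hH1
  IsRPairClass H1 hH1 α C0 C1 D0 D1 ∧
  (∀ z ∈ UHP,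
    (2 : ℂ) • ImOp ((C1 z).comp ((Submodule.orthogonalProjectionOnto H1).comp (adjoint (C0 z))))
      + (α : ℂ) • ((C0 z).comp ((P2full H1 hH1).comp (adjoint (C0 z)))) = 0) ∧
  (α = 1 → ∀ z ∈ UHP, ∃ e : ↥H1 ≃L[ℂ] Kp,
      (e : ↥H1 →L[ℂ] Kp) = (C0 z).comp H1.subtypeL + Complex.I • C1 z) ∧
  (α = -1 → ∀ z ∈ UHP, ∃ e : H0 ≃L[ℂ] Kp,
      (e : H0 →L[ℂ] Kp) = C0 z + Complex.I • (C1 z).comp (Submodule.orthogonalProjectionOnto H1))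

universe u

/-! The conditions of `R̃⁰_α` at the single point `λ = i` already force `ℋ₀ ≅ ℋ₁`, and constant
pairs suffice for the converse. After replacing `C₁` by `αC₁`, equality in (i) says that
`M = C₀ - iC₁P₁ : ℋ₀ → 𝒦₊` and `N = C₀₁ + iC₁ : ℋ₁ → 𝒦₊` satisfy `M(1 + P₂)M* = NN*`.
Writing `1 + P₂ = SS*` with the invertible `S = 1 + (√2 - 1)P₂`, the isomorphisms
`(MS)* : 𝒦₊ → ℋ₀` and `N* : 𝒦₊ → ℋ₁` satisfy `‖(MS)*k‖ = ‖N*k‖`, so `N*((MS)*)⁻¹` is unitary.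
Conversely, a unitary `U : ℋ₀ → ℋ₁` gives `M = 1`, `N = SU⁻¹`; every such `(M, N)` comes from
some `(C₀, C₁)`, and choosing `τ₋ = τ₊` turns (iii) into the same identity as equality in (i). -/

theorem IsIdempotentElem.one_add_smul_mul_one_add_smul {R : Type*} [Ring R] [Algebra ℂ R]
    {q : R} (hq : IsIdempotentElem q) (u v : ℂ) :
    (1 + u • q) * (1 + v • q) = 1 + (u + v + u * v) • q := by
  simp only [add_mul, mul_add, one_mul, mul_one, smul_mul_smul_comm, hq.eq]
  module

theorem IsStarProjection.exists_isUnit_mul_star_eq_one_add {R : Type*} [Ring R] [StarRing R]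
    [Algebra ℂ R] [StarModule ℂ R] {q : R} (hq : IsStarProjection q) :
    ∃ s : R, IsUnit s ∧ s * star s = 1 + q := by
  set r : ℂ := ((Real.sqrt 2 : ℝ) : ℂ) with hr_def
  have hr : r ^ 2 = 2 := by
    rw [hr_def, ← ofReal_pow, Real.sq_sqrt zero_le_two]; norm_num
  have hmul := hq.isIdempotentElem.one_add_smul_mul_one_add_smul
  have hstar : star (1 + (r - 1) • q) = 1 + (r - 1) • q := by
    rw [star_add, star_one, star_smul, hq.isSelfAdjoint.star_eq, hr_def]
    simp [conj_ofReal]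
  refine ⟨1 + (r - 1) • q, ⟨⟨_, 1 + (r / 2 - 1) • q, ?_, ?_⟩, rfl⟩, ?_⟩
  · rw [hmul, show r - 1 + (r / 2 - 1) + (r - 1) * (r / 2 - 1) = 0 by linear_combination hr / 2,
      zero_smul, add_zero]
  · rw [hmul, show r / 2 - 1 + (r - 1) + (r / 2 - 1) * (r - 1) = 0 by linear_combination hr / 2,
      zero_smul, add_zero]
  · rw [hstar, hmul, show r - 1 + (r - 1) + (r - 1) * (r - 1) = 1 by linear_combination hr,
      one_smul]

theorem nonempty_linearIsometryEquiv_of_norm_eq {E F K : Type*}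
    [NormedAddCommGroup E] [NormedSpace ℂ E] [NormedAddCommGroup F] [NormedSpace ℂ F]
    [NormedAddCommGroup K] [NormedSpace ℂ K]
    (X : K ≃L[ℂ] E) (Y : K ≃L[ℂ] F) (h : ∀ k, ‖X k‖ = ‖Y k‖) :
    Nonempty (E ≃ₗᵢ[ℂ] F) :=
  ⟨⟨(X.symm.trans Y).toLinearEquiv, fun x => by simpa using (h (X.symm x)).symm⟩⟩

section Adjoint

variable {E F K : Type*}
  [NormedAddCommGroup E] [InnerProductSpace ℂ E] [CompleteSpace E]
  [NormedAddCommGroup F] [InnerProductSpace ℂ F] [CompleteSpace F]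
  [NormedAddCommGroup K] [InnerProductSpace ℂ K] [CompleteSpace K]

def ContinuousLinearEquiv.adjoint (e : E ≃L[ℂ] K) : K ≃L[ℂ] E :=
  ContinuousLinearEquiv.equivOfInverse (ContinuousLinearMap.adjoint (e : E →L[ℂ] K))
    (ContinuousLinearMap.adjoint (e.symm : K →L[ℂ] E))
    (fun x => by
      rw [← comp_apply, ← adjoint_comp, e.coe_comp_coe_symm, adjoint_id, id_apply])
    (fun x => by
      rw [← comp_apply, ← adjoint_comp, e.coe_symm_comp_coe, adjoint_id, id_apply])

theorem nonempty_linearIsometryEquiv_of_comp_adjoint_eq (A : E ≃L[ℂ] K) (B : F ≃L[ℂ] K)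
    (h : (A : E →L[ℂ] K) ∘L adjoint (A : E →L[ℂ] K)
      = (B : F →L[ℂ] K) ∘L adjoint (B : F →L[ℂ] K)) :
    Nonempty (E ≃ₗᵢ[ℂ] F) := by
  refine nonempty_linearIsometryEquiv_of_norm_eq A.adjoint B.adjoint fun k => ?_
  have hA := apply_norm_sq_eq_inner_adjoint_left (adjoint (A : E →L[ℂ] K)) k
  have hB := apply_norm_sq_eq_inner_adjoint_left (adjoint (B : F →L[ℂ] K)) k
  rw [adjoint_adjoint] at hA hB
  rw [h, ← hB] at hA
  exact (sq_eq_sq₀ (norm_nonneg _) (norm_nonneg _)).mp hA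

end Adjoint

section Projection

variable {H0 X : Type*} [NormedAddCommGroup H0] [InnerProductSpace ℂ H0]
  [NormedAddCommGroup X] [NormedSpace ℂ X] (H1 : Submodule ℂ H0) [H1.HasOrthogonalProjection]

theorem orthogonalProjectionOnto_comp_subtypeL :
    H1.orthogonalProjectionOnto ∘L H1.subtypeL = ContinuousLinearMap.id ℂ H1 := by
  ext x; simp

theorem starProjection_orthogonal_comp_subtypeL : H1ᗮ.starProjection ∘L H1.subtypeL = 0 := by
  ext x; simp

theorem orthogonalProjectionOnto_comp_starProjection_orthogonal :
    H1.orthogonalProjectionOnto ∘L H1ᗮ.starProjection = 0 := by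
  ext1 x
  exact H1.orthogonalProjectionOnto_eq_zero_iff.mpr (H1ᗮ.starProjection_apply_mem x)

theorem subtypeL_comp_orthogonalProjectionOnto :
    H1.subtypeL ∘L H1.orthogonalProjectionOnto
      = ContinuousLinearMap.id ℂ H0 - H1ᗮ.starProjection := by
  rw [Submodule.starProjection_orthogonal, sub_sub_cancel]; rfl

theorem orthogonalProjectionOnto_comp_subtypeL_comp (f : X →L[ℂ] H1) :
    H1.orthogonalProjectionOnto ∘L H1.subtypeL ∘L f = f := by
  rw [← comp_assoc, orthogonalProjectionOnto_comp_subtypeL, id_comp]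

theorem starProjection_orthogonal_comp_subtypeL_comp (f : X →L[ℂ] H1) :
    H1ᗮ.starProjection ∘L H1.subtypeL ∘L f = 0 := by
  rw [← comp_assoc, starProjection_orthogonal_comp_subtypeL, zero_comp]

theorem orthogonalProjectionOnto_comp_starProjection_orthogonal_comp (f : X →L[ℂ] H0) :
    H1.orthogonalProjectionOnto ∘L H1ᗮ.starProjection ∘L f = 0 := by
  rw [← comp_assoc, orthogonalProjectionOnto_comp_starProjection_orthogonal, zero_comp]

theorem subtypeL_comp_orthogonalProjectionOnto_comp (f : X →L[ℂ] H0) :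
    H1.subtypeL ∘L H1.orthogonalProjectionOnto ∘L f = f - H1ᗮ.starProjection ∘L f := by
  rw [← comp_assoc, subtypeL_comp_orthogonalProjectionOnto, sub_comp, id_comp]

theorem exists_sub_smul_comp_eq_and_comp_add_smul_eq (M : H0 →L[ℂ] X) (N : H1 →L[ℂ] X) :
    ∃ (a : H0 →L[ℂ] X) (b : H1 →L[ℂ] X),
      a - I • b ∘L H1.orthogonalProjectionOnto = M ∧ a ∘L H1.subtypeL + I • b = N := by
  refine ⟨(2⁻¹ : ℂ) • (M ∘L H1.subtypeL + N) ∘L H1.orthogonalProjectionOnto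
      + M ∘L H1ᗮ.starProjection, (-I / 2) • (N - M ∘L H1.subtypeL), ?_, ?_⟩
  · simp only [add_comp, sub_comp, smul_comp, comp_assoc, subtypeL_comp_orthogonalProjectionOnto,
      comp_sub, comp_id, smul_smul]
    match_scalars <;> grind [I_sq]
  · simp only [add_comp, smul_comp, comp_assoc, orthogonalProjectionOnto_comp_subtypeL,
      starProjection_orthogonal_comp_subtypeL, comp_id, comp_zero, add_zero, smul_smul]
    match_scalars <;> grind [I_sq]

end Projection

theorem P2full_eq {H0 : Type*} [NormedAddCommGroup H0] [InnerProductSpace ℂ H0]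
    [CompleteSpace H0] (H1 : Submodule ℂ H0) [hH1 : CompleteSpace H1] :
    P2full H1 hH1 = H1ᗮ.starProjection := by
  rw [Submodule.starProjection_orthogonal]; rfl

theorem two_smul_ImOp {K : Type*} [NormedAddCommGroup K] [InnerProductSpace ℂ K]
    [CompleteSpace K] (T : K →L[ℂ] K) : (2 : ℂ) • ImOp T = (-I) • (T - adjoint T) := by
  rw [ImOp, smul_smul, mul_inv, ← mul_assoc, mul_inv_cancel₀ two_ne_zero, one_mul, inv_I]

section CrossForm

variable {H0 K : Type*} [NormedAddCommGroup H0] [InnerProductSpace ℂ H0] [CompleteSpace H0]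
  [NormedAddCommGroup K] [InnerProductSpace ℂ K] [CompleteSpace K]
  (H1 : Submodule ℂ H0) [CompleteSpace H1]

/-- `C₁C₀₁* - C₀₁C₁* + iαC₀₂C₀₂*`, the left side of (iii) when `τ₋ = τ₊`. -/
def crossForm (α : ℝ) (a : H0 →L[ℂ] K) (b : H1 →L[ℂ] K) : K →L[ℂ] K :=
  b ∘L H1.orthogonalProjectionOnto ∘L adjoint a - (a ∘L H1.subtypeL) ∘L adjoint b
    + (I * α) • (a ∘L H1ᗮ.starProjection ∘L adjoint a)

variable {H1}

theorem two_smul_ImOp_add_eq_crossForm (α : ℝ) (a : H0 →L[ℂ] K) (b : H1 →L[ℂ] K) :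
    (2 : ℂ) • ImOp (b ∘L H1.orthogonalProjectionOnto ∘L adjoint a)
        + (α : ℂ) • (a ∘L H1ᗮ.starProjection ∘L adjoint a) = (-I) • crossForm H1 α a b := by
  rw [two_smul_ImOp, crossForm, adjoint_comp, adjoint_comp, adjoint_adjoint,
    Submodule.adjoint_orthogonalProjectionOnto, smul_add, smul_smul, ← mul_assoc, neg_mul,
    I_mul_I, neg_neg, one_mul, comp_assoc]

theorem crossForm_smul (α β : ℝ) (a : H0 →L[ℂ] K) (b : H1 →L[ℂ] K) :
    crossForm H1 (α * β) a ((α : ℂ) • b) = (α : ℂ) • crossForm H1 β a b := by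
  simp only [crossForm, adjoint.map_smulₛₗ, conj_ofReal, smul_comp, comp_smul, ofReal_mul]
  module

theorem comp_one_add_comp_adjoint_sub_comp_adjoint (a : H0 →L[ℂ] K) (b : H1 →L[ℂ] K) :
    (a - I • b ∘L H1.orthogonalProjectionOnto) ∘L (1 + H1ᗮ.starProjection)
        ∘L adjoint (a - I • b ∘L H1.orthogonalProjectionOnto)
      - (a ∘L H1.subtypeL + I • b) ∘L adjoint (a ∘L H1.subtypeL + I • b)
      = (-2 * I) • crossForm H1 1 a b := by
  simp only [crossForm, map_sub, map_add, adjoint.map_smulₛₗ, adjoint_comp, conj_I,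
    Submodule.adjoint_orthogonalProjectionOnto, Submodule.adjoint_subtypeL, one_def,
    comp_add, add_comp, comp_sub, sub_comp, comp_smul, smul_comp, comp_assoc, id_comp,
    orthogonalProjectionOnto_comp_subtypeL_comp,
    orthogonalProjectionOnto_comp_starProjection_orthogonal_comp,
    starProjection_orthogonal_comp_subtypeL_comp, subtypeL_comp_orthogonalProjectionOnto_comp,
    comp_zero, smul_zero, ofReal_one]
  match_scalars <;> grind [I_sq]

theorem crossForm_eq_zero_iff (a : H0 →L[ℂ] K) (b : H1 →L[ℂ] K) :
    crossForm H1 1 a b = 0 ↔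
      (a - I • b ∘L H1.orthogonalProjectionOnto) ∘L (1 + H1ᗮ.starProjection)
          ∘L adjoint (a - I • b ∘L H1.orthogonalProjectionOnto)
        = (a ∘L H1.subtypeL + I • b) ∘L adjoint (a ∘L H1.subtypeL + I • b) := by
  rw [← smul_eq_zero_iff_right (by simp : (-2 * I : ℂ) ≠ 0),
    ← comp_one_add_comp_adjoint_sub_comp_adjoint, sub_eq_zero]

end CrossForm

section SelfAdjointPair

variable {H0 K : Type*} [NormedAddCommGroup H0] [InnerProductSpace ℂ H0] [CompleteSpace H0]
  [NormedAddCommGroup K] [InnerProductSpace ℂ K] [CompleteSpace K]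
  {H1 : Submodule ℂ H0} [CompleteSpace H1]

/-- The conditions of `R̃⁰_1(ℋ₀,ℋ₁)` at a single point `λ`, with `a = C₀(λ)`, `b = C₁(λ)`. -/
def IsSelfAdjointPair (a : H0 →L[ℂ] K) (b : H1 →L[ℂ] K) : Prop :=
  crossForm H1 1 a b = 0 ∧
    (∃ M : H0 ≃L[ℂ] K, (M : H0 →L[ℂ] K) = a - I • b ∘L H1.orthogonalProjectionOnto) ∧
    ∃ N : H1 ≃L[ℂ] K, (N : H1 →L[ℂ] K) = a ∘L H1.subtypeL + I • b

theorem exists_continuousLinearEquiv_comp_adjoint_eq_one_add_starProjection :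
    ∃ S : H0 ≃L[ℂ] H0,
      (S : H0 →L[ℂ] H0) ∘L adjoint (S : H0 →L[ℂ] H0) = 1 + H1ᗮ.starProjection := by
  obtain ⟨s, hs, hss⟩ := (isStarProjection_starProjection :
    IsStarProjection H1ᗮ.starProjection).exists_isUnit_mul_star_eq_one_add
  exact ⟨ContinuousLinearEquiv.unitsEquiv ℂ H0 hs.unit, hss⟩

theorem IsSelfAdjointPair.nonempty_linearIsometryEquiv {a : H0 →L[ℂ] K} {b : H1 →L[ℂ] K}
    (h : IsSelfAdjointPair a b) : Nonempty (H0 ≃ₗᵢ[ℂ] H1) := by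
  obtain ⟨hform, ⟨M, hM⟩, ⟨N, hN⟩⟩ := h
  obtain ⟨S, hS⟩ := exists_continuousLinearEquiv_comp_adjoint_eq_one_add_starProjection (H1 := H1)
  refine nonempty_linearIsometryEquiv_of_comp_adjoint_eq (S.trans M) N ?_
  rw [← ContinuousLinearEquiv.comp_coe, adjoint_comp, comp_assoc,
    ← comp_assoc _ _ (adjoint (M : H0 →L[ℂ] K)), hS, hM, hN]
  exact (crossForm_eq_zero_iff a b).mp hform

theorem exists_isSelfAdjointPair (U : H0 ≃ₗᵢ[ℂ] H1) :
    ∃ (a : H0 →L[ℂ] H0) (b : H1 →L[ℂ] H0), IsSelfAdjointPair a b := by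
  obtain ⟨S, hS⟩ := exists_continuousLinearEquiv_comp_adjoint_eq_one_add_starProjection (H1 := H1)
  set N := U.symm.toContinuousLinearEquiv.trans S
  obtain ⟨a, b, hM, hN⟩ := exists_sub_smul_comp_eq_and_comp_add_smul_eq H1
    (ContinuousLinearMap.id ℂ H0) (N : H1 →L[ℂ] H0)
  refine ⟨a, b, ?_, ⟨ContinuousLinearEquiv.refl ℂ H0, hM.symm⟩, ⟨N, hN.symm⟩⟩
  have hU : (U.symm : H1 →L[ℂ] H0) ∘L (U : H0 →L[ℂ] H1) = ContinuousLinearMap.id ℂ H0 := by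
    ext; simp
  rw [crossForm_eq_zero_iff, hM, hN, adjoint_id, id_comp, comp_id,
    ← ContinuousLinearEquiv.comp_coe, adjoint_comp, LinearIsometryEquiv.adjoint_eq_symm,
    LinearIsometryEquiv.symm_symm, comp_assoc, ← comp_assoc _ _ (adjoint _), hU, id_comp, hS]

end SelfAdjointPair

/-- `rw [neg_one_smul]` does not fire on operators out of a submodule, whose module structure is
found along a different instance path. -/
theorem ofReal_neg_one_smul {E F : Type*} [NormedAddCommGroup E] [NormedSpace ℂ E]
    [NormedAddCommGroup F] [NormedSpace ℂ F] (f : E →L[ℂ] F) : ((-1 : ℝ) : ℂ) • f = -f := by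
  rw [ofReal_neg, ofReal_one]; exact neg_one_smul ℂ f

theorem I_mem_UHP : I ∈ UHP := by simp [UHP]

section RZero

variable {H0 Kp Km : Type*} [NormedAddCommGroup H0] [InnerProductSpace ℂ H0] [CompleteSpace H0]
  [NormedAddCommGroup Kp] [InnerProductSpace ℂ Kp] [CompleteSpace Kp]
  [NormedAddCommGroup Km] [InnerProductSpace ℂ Km] [CompleteSpace Km]
  {H1 : Submodule ℂ H0} [hH1 : CompleteSpace H1] {α : ℝ}

theorem IsRZeroPair.isSelfAdjointPair {C0 : ℂ → H0 →L[ℂ] Kp} {C1 : ℂ → H1 →L[ℂ] Kp}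
    {D0 : ℂ → H0 →L[ℂ] Km} {D1 : ℂ → H1 →L[ℂ] Km} (h : IsRZeroPair H1 hH1 α C0 C1 D0 D1) :
    IsSelfAdjointPair (C0 I) ((α : ℂ) • C1 I) := by
  obtain ⟨⟨hα, -, -, -, -, -, -, -, hiv, hiv'⟩, hzero, hinv, hinv'⟩ := h
  have hαα : α * α = 1 := by rcases hα with rfl | rfl <;> norm_num
  have hform : crossForm H1 1 (C0 I) ((α : ℂ) • C1 I) = 0 := by
    have h := hzero I I_mem_UHP
    rw [P2full_eq, two_smul_ImOp_add_eq_crossForm, smul_eq_zero_iff_right (by simp)] at h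
    rw [← hαα, crossForm_smul, h, smul_zero]
  rcases hα with rfl | rfl
  · rw [ofReal_one, one_smul] at hform ⊢
    exact ⟨hform, (hiv rfl).1 I I_mem_UHP, hinv rfl I I_mem_UHP⟩
  · rw [ofReal_neg_one_smul] at hform ⊢
    refine ⟨hform, ?_, ?_⟩
    · simpa only [neg_comp, smul_neg, sub_neg_eq_add] using hinv' rfl I I_mem_UHP
    · simpa only [smul_neg, ← sub_eq_add_neg] using (hiv' rfl).1 I I_mem_UHP

theorem IsSelfAdjointPair.isRZeroPair {a : H0 →L[ℂ] Kp} {b : H1 →L[ℂ] Kp}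
    (h : IsSelfAdjointPair a b) (hα : α = 1 ∨ α = -1) :
    IsRZeroPair H1 hH1 α (fun _ => a) (fun _ => (α : ℂ) • b) (fun _ => a)
      (fun _ => (α : ℂ) • b) := by
  obtain ⟨hform, ⟨M, hM⟩, ⟨N, hN⟩⟩ := h
  have hform' : crossForm H1 α a ((α : ℂ) • b) = 0 := by
    have h := crossForm_smul (H1 := H1) α 1 a b
    rwa [mul_one, hform, smul_zero] at h
  have hzero : (2 : ℂ) • ImOp (((α : ℂ) • b) ∘L H1.orthogonalProjectionOnto ∘L adjoint a)
      + (α : ℂ) • (a ∘L P2full H1 hH1 ∘L adjoint a) = 0 := by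
    rw [P2full_eq, two_smul_ImOp_add_eq_crossForm, hform', smul_zero]
  refine ⟨⟨hα, differentiableOn_const _, differentiableOn_const _, differentiableOn_const _,
    differentiableOn_const _, fun _ _ => ?_, fun _ _ => ?_, fun _ _ => ?_, ?_, ?_⟩,
    fun _ _ => hzero, ?_, ?_⟩
  · rw [hzero]; exact isPositive_zero
  · rw [hzero, neg_zero]; exact isPositive_zero
  · rw [P2full_eq]; exact hform'
  · rintro rfl
    rw [ofReal_one, one_smul]
    exact ⟨fun _ _ => ⟨M, hM⟩, fun _ _ => ⟨N, hN⟩⟩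
  · rintro rfl
    rw [ofReal_neg_one_smul]
    exact ⟨fun _ _ => ⟨N, by rw [hN, smul_neg, sub_neg_eq_add]⟩,
      fun _ _ => ⟨M, by rw [hM, neg_comp, smul_neg, sub_eq_add_neg]⟩⟩
  · rintro rfl
    rw [ofReal_one, one_smul]
    exact fun _ _ => ⟨N, hN⟩
  · rintro rfl
    rw [ofReal_neg_one_smul]
    exact fun _ _ => ⟨M, by rw [hM, neg_comp, smul_neg, sub_eq_add_neg]⟩

end RZero

theorem exists_isRZeroPair_iff {H0 : Type u} [NormedAddCommGroup H0] [InnerProductSpace ℂ H0]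
    [CompleteSpace H0] (H1 : Submodule ℂ H0) (hH1 : CompleteSpace H1) {α : ℝ}
    (hα : α = 1 ∨ α = -1) :
    (∃ (Kp Km : HilbertC.{u}) (C0 : ℂ → H0 →L[ℂ] Kp.carrier)
        (C1 : ℂ → ↥H1 →L[ℂ] Kp.carrier) (D0 : ℂ → H0 →L[ℂ] Km.carrier)
        (D1 : ℂ → ↥H1 →L[ℂ] Km.carrier), IsRZeroPair H1 hH1 α C0 C1 D0 D1)
      ↔ Nonempty (H0 ≃ₗᵢ[ℂ] ↥H1) := by
  constructor
  · rintro ⟨Kp, Km, C0, C1, D0, D1, h⟩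
    exact h.isSelfAdjointPair.nonempty_linearIsometryEquiv
  · rintro ⟨U⟩
    obtain ⟨a, b, hab⟩ := exists_isSelfAdjointPair U
    exact ⟨⟨H0⟩, ⟨H0⟩, _, _, _, _, hab.isRZeroPair hα⟩


theorem Submodule.nonempty_linearIsometryEquiv_iff_eq_top {E : Type*} [NormedAddCommGroup E]
    [InnerProductSpace ℂ E] [FiniteDimensional ℂ E] (V : Submodule ℂ E) :
    Nonempty (E ≃ₗᵢ[ℂ] V) ↔ V = ⊤ := by
  refine ⟨fun ⟨e⟩ => V.eq_top_of_finrank_eq e.toLinearEquiv.finrank_eq.symm, ?_⟩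
  rintro rfl
  exact ⟨(LinearIsometryEquiv.ofTop _ (⊤ : Submodule ℂ E) rfl).symm⟩

theorem statement2 {H0 : Type u}
    [NormedAddCommGroup H0] [InnerProductSpace ℂ H0] [CompleteSpace H0]
    (H1 : Submodule ℂ H0) (hH1 : CompleteSpace ↥H1) (α : ℝ) (hα : α = 1 ∨ α = -1) :
    ((∃ (Kp Km : HilbertC.{u}) (C0 : ℂ → H0 →L[ℂ] Kp.carrier)
        (C1 : ℂ → ↥H1 →L[ℂ] Kp.carrier) (D0 : ℂ → H0 →L[ℂ] Km.carrier)
        (D1 : ℂ → ↥H1 →L[ℂ] Km.carrier), IsRZeroPair H1 hH1 α C0 C1 D0 D1)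
      ↔ Nonempty (H0 ≃ₗᵢ[ℂ] ↥H1)) ∧
    (FiniteDimensional ℂ H0 →
      ((∃ (Kp Km : HilbertC.{u}) (C0 : ℂ → H0 →L[ℂ] Kp.carrier)
          (C1 : ℂ → ↥H1 →L[ℂ] Kp.carrier) (D0 : ℂ → H0 →L[ℂ] Km.carrier)
          (D1 : ℂ → ↥H1 →L[ℂ] Km.carrier), IsRZeroPair H1 hH1 α C0 C1 D0 D1)
        ↔ H1 = ⊤)) := by
  exact ⟨exists_isRZeroPair_iff H1 hH1 hα,
    fun _ => (exists_isRZeroPair_iff H1 hH1 hα).trans H1.nonempty_linearIsometryEquiv_iff_eq_top⟩
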